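/- Let G be a finite simple chordal graph on vertex set {x_1,…,x_n} such that F(J(G)^s) = G(J(G)^s), i.e., every s-fold product of minimal generators of J(G) is a minimal generator of J(G)^s. Let R(G) = u_1,…,u_q be a rooted list of G and let R(J(G)^s) = Y_1,…,Y_p be the minimal generators of J(G)^s listed in decreasing rooted order. Suppose Y_r = u_{j_1}⋯u_{j_s} is the maximal expression for some 2 ≤ r ≤ p with j_1 ≤ ⋯ ≤ j_s. Then for each 1 ≤ t ≤ s with j_t ≥ 2, the colon ideal (u_1, u_2,…,u_{j_t−1}) : (u_{j_t}) is contained in the colon ideal (Y_1,…,Y_{r−1}) : (Y_r). -/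

import Mathlib

open MvPolynomial

noncomputable section

/-- The cover ideal of the path graph `P_n` on vertices `x_1, …, x_n`:
the intersection of the ideals `(x_i, x_{i+1})` over the edges of the path. -/
def pathCoverIdeal (k : Type*) [Field k] (n : ℕ) : Ideal (MvPolynomial ℕ k) :=
  ⨅ i ∈ Finset.Icc 1 (n - 1), Ideal.span {(X i : MvPolynomial ℕ k), X (i + 1)}

/-- A monomial with coefficient `1`. -/
def IsMonomial {k : Type*} [Field k] (m : MvPolynomial ℕ k) : Prop :=
  ∃ a : ℕ →₀ ℕ, m = monomial a 1

/-- The minimal monomial generating set `G(I)` of a monomial ideal `I`: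
monomials of `I` that are not strictly divisible by another monomial of `I`. -/
def minGens {k : Type*} [Field k] (I : Ideal (MvPolynomial ℕ k)) :
    Set (MvPolynomial ℕ k) :=
  {m | IsMonomial m ∧ m ∈ I ∧ ∀ m', IsMonomial m' → m' ∈ I → m' ∣ m → m' = m}

/-- The rooted list `R(P_n)` of the path `P_n`. -/
def rootedList (k : Type*) [Field k] : ℕ → List (MvPolynomial ℕ k)
  | 0 => [1]
  | 1 => [1]
  | 2 => [X 1, X 2]
  | 3 => [X 2, X 1 * X 3]
  | (n + 4) =>
      ((rootedList k (n + 2)).map fun u => X (n + 3) * u) ++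
      ((rootedList k (n + 1)).map fun u => X (n + 4) * X (n + 2) * u)

/-- `F(I^s)`: the set of `s`-fold products of minimal generators of `I`. -/
def sFold {k : Type*} [Field k] (I : Ideal (MvPolynomial ℕ k)) (s : ℕ) :
    Set (MvPolynomial ℕ k) :=
  {m | ∃ L : List (MvPolynomial ℕ k), L.length = s ∧ (∀ u ∈ L, u ∈ minGens I) ∧ m = L.prod}

/-- `a >_lex b`: the first entry where `a` and `b` differ is bigger in `a`. -/
def lexGt (a b : ℕ → ℕ) : Prop :=
  ∃ t, (∀ j, j < t → a j = b j) ∧ b t < a t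

/-- `a` is an exponent-vector expression of `M` as an `s`-fold product of the terms of
the list `L`. -/
def IsExprOn {k : Type*} [Field k] (L : List (MvPolynomial ℕ k)) (s : ℕ) (a : ℕ → ℕ)
    (M : MvPolynomial ℕ k) : Prop :=
  (∀ i, L.length ≤ i → a i = 0) ∧ (∑ i ∈ Finset.range L.length, a i) = s ∧
    M = ∏ i ∈ Finset.range L.length, (L.getD i 1) ^ (a i)

/-- `a` is the (lexicographically) maximal expression of `M` as an `s`-fold product of
the terms of the list `L`. -/
def IsMaxExpr {k : Type*} [Field k] (L : List (MvPolynomial ℕ k)) (s : ℕ) (a : ℕ → ℕ)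
    (M : MvPolynomial ℕ k) : Prop :=
  IsExprOn L s a M ∧ ∀ b, IsExprOn L s b M → b ≠ a → lexGt a b

/-- The rooted order `M >_R N` on `s`-fold products, relative to the list `L` of
minimal generators: maximal expressions are compared lexicographically. -/
def rootedGt {k : Type*} [Field k] (L : List (MvPolynomial ℕ k)) (s : ℕ)
    (M N : MvPolynomial ℕ k) : Prop :=
  ∃ a b, IsMaxExpr L s a M ∧ IsMaxExpr L s b N ∧ lexGt a b

/-- An ideal is generated by a subset of the variables. -/
def genByVars {k : Type*} [Field k] (I : Ideal (MvPolynomial ℕ k)) : Prop :=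
  ∃ T : Set ℕ, I = Ideal.span ((fun i => (X i : MvPolynomial ℕ k)) '' T)

end

/-- A finite simple graph on a finite set of vertices drawn from `ℕ`
(vertices are identified with the variables `x_i` of the polynomial ring). -/
structure FinGraph where
  verts : Finset ℕ
  adj : ℕ → ℕ → Bool
  symm : ∀ a b, adj a b = adj b a
  loopless : ∀ a, adj a a = false
  mem_of_adj : ∀ a b, adj a b = true → a ∈ verts ∧ b ∈ verts

/-- The (open) neighbourhood `N(v)` of a vertex. -/
def FinGraph.nbr (G : FinGraph) (v : ℕ) : Finset ℕ :=
  G.verts.filter fun w => G.adj v w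

/-- The graph `G \ A` obtained by deleting a set `A` of vertices. -/
def FinGraph.del (G : FinGraph) (A : Finset ℕ) : FinGraph where
  verts := G.verts \ A
  adj a b := G.adj a b && !(decide (a ∈ A) || decide (b ∈ A))
  symm a b := by (try simp only []); rw [G.symm a b, Bool.or_comm]
  loopless a := by simp [G.loopless a]
  mem_of_adj a b h := by
    simp only [Bool.and_eq_true, Bool.not_eq_true', Bool.or_eq_false_iff,
      decide_eq_false_iff_not] at h
    exact ⟨Finset.mem_sdiff.2 ⟨(G.mem_of_adj a b h.1).1, h.2.1⟩,
      Finset.mem_sdiff.2 ⟨(G.mem_of_adj a b h.1).2, h.2.2⟩⟩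

/-- A graph is chordal if it has no induced cycle of length greater than `3`. -/
def FinGraph.Chordal (G : FinGraph) : Prop :=
  ¬ ∃ (m : ℕ) (f : ℕ → ℕ), 4 ≤ m ∧
    (∀ i j, i < m → j < m → f i = f j → i = j) ∧
    (∀ i, i < m → G.adj (f i) (f ((i + 1) % m)) = true) ∧
    (∀ i j, i < m → j < m → G.adj (f i) (f j) = true →
      j = (i + 1) % m ∨ i = (j + 1) % m)

/-- A simplicial vertex: its neighbourhood induces a complete graph. -/
def FinGraph.Simplicial (G : FinGraph) (v : ℕ) : Prop :=
  v ∈ G.verts ∧ ∀ a ∈ G.nbr v, ∀ b ∈ G.nbr v, a ≠ b → G.adj a b = true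

/-- The cover ideal `J(G)` of a graph, i.e. the intersection of the ideals
`(x_a, x_b)` over all edges `{x_a, x_b}` of `G`. -/
noncomputable def coverIdeal (k : Type*) [Field k] (G : FinGraph) : Ideal (MvPolynomial ℕ k) :=
  ⨅ (a : ℕ) (b : ℕ) (_ : G.adj a b = true), Ideal.span {(X a : MvPolynomial ℕ k), X b}

/-- `IsRootedList k G L`: `L` is a rooted list of the (chordal) graph `G`.  If `G` has
no edges then `L = [1]`; otherwise, for some simplicial vertex `v` whose closed
neighbourhood `N[v]` is enumerated as `l = v, x_2, …, x_m`, `L` is the concatenation of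
the lists `R(G \ N[x_i]) · N(x_i)` for `x_i` running along `l`. -/
inductive IsRootedList (k : Type*) [Field k] : FinGraph → List (MvPolynomial ℕ k) → Prop
  | edgeless (G : FinGraph) (h : ∀ a b, G.adj a b = false) :
      IsRootedList k G [1]
  | step (G : FinGraph) (v : ℕ)
      (hsimp : G.Simplicial v) (hedge : ∃ w, G.adj v w = true)
      (l : List ℕ) (hnd : l.Nodup) (hhd : l.head? = some v)
      (hset : l.toFinset = insert v (G.nbr v))
      (Ls : List (List (MvPolynomial ℕ k))) (hlen : Ls.length = l.length)
      (hrec : ∀ i, i < l.length →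
        IsRootedList k (G.del (insert (l.getD i 0) (G.nbr (l.getD i 0)))) (Ls.getD i []))
      : IsRootedList k G
          ((List.range l.length).flatMap fun i =>
            (Ls.getD i []).map fun u => (∏ j ∈ G.nbr (l.getD i 0), X j) * u)

/-!
Write `Y_r = u_t · W`, where `u_t` is a factor of the maximal expression of `Y_r`. For `j < t`,
`u_j · W` is again an `s`-fold product of minimal generators of `J(G)` (the terms of a rooted
list are the products over minimal vertex covers), hence a minimal generator of `J(G)^s` since
`F(J(G)^s) = G(J(G)^s)`. Its expression is lexicographically larger than the maximal expression
of `Y_r`, so it is some `Y_m` with `m < r`. Therefore `f · u_t ∈ (u_j : j < t)` implies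
`f · Y_r ∈ (Y_m : m < r)`.
-/

section LexOrder

theorem lexGt_irrefl (a : ℕ → ℕ) : ¬ lexGt a a :=
  fun ⟨_, _, h⟩ => lt_irrefl _ h

theorem lexGt_trans {a b c : ℕ → ℕ} (hab : lexGt a b) (hbc : lexGt b c) : lexGt a c := by
  obtain ⟨t₁, heq₁, hlt₁⟩ := hab
  obtain ⟨t₂, heq₂, hlt₂⟩ := hbc
  refine ⟨min t₁ t₂, fun j hj => (heq₁ j (by omega)).trans (heq₂ j (by omega)), ?_⟩
  rcases lt_trichotomy t₁ t₂ with h | rfl | h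
  · rw [min_eq_left h.le, ← heq₂ t₁ h]; exact hlt₁
  · rw [min_self]; omega
  · rw [min_eq_right h.le, heq₁ t₂ h]; exact hlt₂

theorem lexGt_add_single {j t : ℕ} (c : ℕ → ℕ) (hjt : j < t) :
    lexGt (c + Pi.single j 1) (c + Pi.single t 1) := by
  refine ⟨j, fun i hi => ?_, ?_⟩
  · simp [hi.ne, (hi.trans hjt).ne]
  · simp [hjt.ne]

end LexOrder

section MaxExpr

variable {k : Type*} [Field k] {L : List (MvPolynomial ℕ k)} {s : ℕ}

theorem IsMaxExpr.not_lexGt {b c : ℕ → ℕ} {N : MvPolynomial ℕ k} (hc : IsMaxExpr L s c N)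
    (hb : IsExprOn L s b N) : ¬ lexGt b c := fun hbc => by
  by_cases h : b = c
  · exact lexGt_irrefl b (h ▸ hbc)
  · exact lexGt_irrefl b (lexGt_trans hbc (hc.2 b hb h))

theorem IsMaxExpr.unique {a b : ℕ → ℕ} {N : MvPolynomial ℕ k} (ha : IsMaxExpr L s a N)
    (hb : IsMaxExpr L s b N) : a = b := by
  by_contra h
  exact hb.not_lexGt ha.1 (ha.2 b hb.1 (Ne.symm h))

theorem isExprOn_add_single {c : ℕ → ℕ} {j : ℕ} {M : MvPolynomial ℕ k} (hj : j < L.length) :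
    IsExprOn L s (c + Pi.single j 1) M ↔ (∀ i, L.length ≤ i → c i = 0) ∧
      ∑ i ∈ Finset.range L.length, c i + 1 = s ∧
      M = L.getD j 1 * ∏ i ∈ Finset.range L.length, L.getD i 1 ^ c i := by
  have hj' : j ∈ Finset.range L.length := Finset.mem_range.2 hj
  have hzero : ∀ i, L.length ≤ i → ((c i + if i = j then 1 else 0) = 0 ↔ c i = 0) :=
    fun i hi => by simp [show i ≠ j by omega]
  simp only [IsExprOn, Pi.add_apply, pow_add, Finset.prod_mul_distrib, Finset.sum_add_distrib,
    Pi.single_apply, pow_ite, pow_one, pow_zero, Finset.prod_ite_eq', Finset.sum_ite_eq',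
    if_pos hj', mul_comm (L.getD j 1)]
  exact and_congr (forall₂_congr hzero) Iff.rfl

theorem mem_take_of_lexGt {Ys : List (MvPolynomial ℕ k)} (hsort : Ys.Pairwise (rootedGt L s))
    {r : ℕ} (hr : r < Ys.length) {a b : ℕ → ℕ} (ha : IsMaxExpr L s a (Ys.getD r 1))
    {N : MvPolynomial ℕ k} (hN : N ∈ Ys) (hb : IsExprOn L s b N) (hba : lexGt b a) :
    N ∈ Ys.take r := by
  obtain ⟨m, hm, rfl⟩ := List.getElem_of_mem hN
  rw [List.getD_eq_getElem _ _ hr] at ha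
  refine List.mem_take_iff_getElem.2 ⟨m, lt_min ?_ hm, rfl⟩
  by_contra! hrm
  rcases hrm.eq_or_lt with rfl | hlt
  · exact ha.not_lexGt hb hba
  · obtain ⟨a', c, ha', hc, hac⟩ := List.pairwise_iff_getElem.1 hsort r m hr hm hlt
    rw [ha'.unique ha] at hac
    exact hc.not_lexGt hb (lexGt_trans hba hac)

end MaxExpr

section SFold

variable {k : Type*} [Field k] {I : Ideal (MvPolynomial ℕ k)}

theorem one_mem_sFold : (1 : MvPolynomial ℕ k) ∈ sFold I 0 :=
  ⟨[], rfl, by simp, rfl⟩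

theorem mul_mem_sFold {M N : MvPolynomial ℕ k} {m n : ℕ} (hM : M ∈ sFold I m)
    (hN : N ∈ sFold I n) : M * N ∈ sFold I (m + n) := by
  obtain ⟨LM, hlen, hmem, rfl⟩ := hM
  obtain ⟨LN, hlen', hmem', rfl⟩ := hN
  refine ⟨LM ++ LN, by simp [hlen, hlen'], ?_, List.prod_append.symm⟩
  simpa [or_imp, forall_and] using ⟨hmem, hmem'⟩

theorem pow_mem_sFold {u : MvPolynomial ℕ k} (hu : u ∈ minGens I) (n : ℕ) :
    u ^ n ∈ sFold I n :=
  ⟨List.replicate n u, List.length_replicate, fun _ h => (List.eq_of_mem_replicate h) ▸ hu,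
    (List.prod_replicate _ _).symm⟩

theorem prod_pow_mem_sFold {ι : Type*} (S : Finset ι) (f : ι → MvPolynomial ℕ k) (e : ι → ℕ)
    (hf : ∀ i ∈ S, f i ∈ minGens I) : ∏ i ∈ S, f i ^ e i ∈ sFold I (∑ i ∈ S, e i) := by
  classical
  induction S using Finset.induction with
  | empty => exact one_mem_sFold
  | insert i S hi ih =>
    rw [Finset.prod_insert hi, Finset.sum_insert hi]
    exact mul_mem_sFold (pow_mem_sFold (hf i (S.mem_insert_self i)) _)
      (ih fun j hj => hf j (Finset.mem_insert_of_mem hj))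

theorem IsExprOn.mem_sFold {L : List (MvPolynomial ℕ k)} {s : ℕ} {b : ℕ → ℕ}
    {M : MvPolynomial ℕ k} (hb : IsExprOn L s b M) (hL : ∀ u ∈ L, u ∈ minGens I) :
    M ∈ sFold I s := by
  obtain ⟨-, hsum, rfl⟩ := hb
  rw [← hsum]
  refine prod_pow_mem_sFold _ _ _ fun i hi => hL _ ?_
  rw [List.getD_eq_getElem _ _ (Finset.mem_range.1 hi)]
  exact List.getElem_mem _

end SFold

theorem Ideal.colon_span_singleton_le_colon_mul {R : Type*} [CommRing R] {S : Set R}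
    {I : Ideal R} {u w : R} (h : ∀ y ∈ S, y * w ∈ I) :
    (Ideal.span S).colon (Ideal.span {u}) ≤ I.colon (Ideal.span {u * w}) := by
  intro f hf
  rw [Ideal.mem_colon_span_singleton] at hf ⊢
  have hspan : Ideal.span S ≤ I.colon {w} :=
    Ideal.span_le.2 fun y hy => Submodule.mem_colon_singleton.2 (h y hy)
  simpa [mul_assoc] using hspan hf

namespace FinGraph

def IsVertexCover (G : FinGraph) (C : Finset ℕ) : Prop :=
  ∀ a b, G.adj a b = true → a ∈ C ∨ b ∈ C

variable (G : FinGraph)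

@[simp]
theorem del_adj (A : Finset ℕ) (a b : ℕ) :
    (G.del A).adj a b = true ↔ G.adj a b = true ∧ a ∉ A ∧ b ∉ A := by
  simp [del]

theorem mem_nbr {v w : ℕ} : w ∈ G.nbr v ↔ G.adj v w = true :=
  ⟨fun h => (Finset.mem_filter.1 h).2, fun h => Finset.mem_filter.2 ⟨(G.mem_of_adj v w h).2, h⟩⟩

theorem self_notMem_nbr (v : ℕ) : v ∉ G.nbr v := by
  simp [mem_nbr, G.loopless]

variable {G}

theorem IsVertexCover.del {C : Finset ℕ} (hC : G.IsVertexCover C) (A : Finset ℕ) :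
    (G.del A).IsVertexCover (C \ A) := by
  intro a b hab
  rw [del_adj] at hab
  simpa [hab.2.1, hab.2.2] using hC a b hab.1

theorem IsVertexCover.nbr_union {x : ℕ} {D : Finset ℕ}
    (hD : (G.del (insert x (G.nbr x))).IsVertexCover D) : G.IsVertexCover (G.nbr x ∪ D) := by
  intro a b hab
  simp only [Finset.mem_union]
  by_cases ha : a ∈ insert x (G.nbr x)
  · rcases Finset.mem_insert.1 ha with rfl | ha
    · exact Or.inr (Or.inl ((G.mem_nbr).2 hab))
    · exact Or.inl (Or.inl ha)
  by_cases hb : b ∈ insert x (G.nbr x)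
  · rcases Finset.mem_insert.1 hb with rfl | hb
    · exact Or.inl (Or.inl ((G.mem_nbr).2 (by rwa [G.symm])))
    · exact Or.inr (Or.inl hb)
  rcases hD a b ((G.del_adj _ a b).2 ⟨hab, ha, hb⟩) with h | h
  · exact Or.inl (Or.inr h)
  · exact Or.inr (Or.inr h)

theorem minimal_isVertexCover_nbr_union {x : ℕ} {D : Finset ℕ}
    (hDv : D ⊆ (G.del (insert x (G.nbr x))).verts)
    (hD : Minimal (G.del (insert x (G.nbr x))).IsVertexCover D) :
    Minimal G.IsVertexCover (G.nbr x ∪ D) := by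
  refine ⟨hD.1.nbr_union, fun C hC hCsub => ?_⟩
  -- `C` misses `x`, so it contains `N(x)`; off `N[x]` it covers `G \ N[x]`, so it contains `D`.
  have hxD : x ∉ D := fun h => (Finset.mem_sdiff.1 (hDv h)).2 (Finset.mem_insert_self _ _)
  have hxC : x ∉ C := fun h => by
    rcases Finset.mem_union.1 (hCsub h) with h | h
    exacts [G.self_notMem_nbr x h, hxD h]
  have hnbr : G.nbr x ⊆ C := fun w hw =>
    (hC x w ((G.mem_nbr).1 hw)).resolve_left hxC
  have hCD : C \ insert x (G.nbr x) ⊆ D := fun w hw => by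
    simp only [Finset.mem_sdiff, Finset.mem_insert, not_or] at hw
    exact (Finset.mem_union.1 (hCsub hw.1)).resolve_left hw.2.2
  have hDC := hD.2 (hC.del _) hCD
  exact Finset.union_subset hnbr fun w hw => (Finset.mem_sdiff.1 (hDC hw)).1

end FinGraph

section CoverIdeal

variable {k : Type*} [Field k] {G : FinGraph}

theorem monomial_mem_coverIdeal_iff {e : ℕ →₀ ℕ} :
    (monomial e 1 : MvPolynomial ℕ k) ∈ coverIdeal k G ↔ G.IsVertexCover e.support := by
  have hpair (a b : ℕ) : ({X a, X b} : Set (MvPolynomial ℕ k)) = X '' {a, b} :=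
    (Set.image_pair _ _ _).symm
  simp [coverIdeal, Submodule.mem_iInf, hpair, mem_ideal_span_X_image,
    FinGraph.IsVertexCover]

theorem prod_X_eq_monomial (C : Finset ℕ) :
    (∏ v ∈ C, X v : MvPolynomial ℕ k) = monomial (∑ v ∈ C, Finsupp.single v 1) 1 :=
  (monomial_sum_one C _).symm

theorem sum_single_one_apply (C : Finset ℕ) (w : ℕ) :
    (∑ v ∈ C, Finsupp.single v 1 : ℕ →₀ ℕ) w = if w ∈ C then 1 else 0 := by
  simp [Finsupp.finsetSum_apply, Finsupp.single_apply]

theorem support_sum_single_one (C : Finset ℕ) :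
    (∑ v ∈ C, Finsupp.single v 1 : ℕ →₀ ℕ).support = C := by
  ext w
  simp [sum_single_one_apply]

theorem prod_X_mem_minGens {C : Finset ℕ} (hC : Minimal G.IsVertexCover C) :
    (∏ v ∈ C, X v : MvPolynomial ℕ k) ∈ minGens (coverIdeal k G) := by
  rw [prod_X_eq_monomial]
  refine ⟨⟨_, rfl⟩, monomial_mem_coverIdeal_iff.2 ((support_sum_single_one C).symm ▸ hC.1), ?_⟩
  rintro _ ⟨e, rfl⟩ he hdvd
  have hle : e ≤ ∑ v ∈ C, Finsupp.single v 1 :=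
    (monomial_dvd_monomial.1 hdvd).1.resolve_left one_ne_zero
  have hsupp : C ⊆ e.support := hC.2 (monomial_mem_coverIdeal_iff.1 he)
    (support_sum_single_one C ▸ Finsupp.support_mono hle)
  suffices e = ∑ v ∈ C, Finsupp.single v 1 by rw [this]
  ext w
  have hw := hle w
  rw [sum_single_one_apply] at hw ⊢
  split_ifs at hw ⊢ with hwC
  · have := Finsupp.mem_support_iff.1 (hsupp hwC)
    omega
  · omega

theorem IsRootedList.exists_minimal_isVertexCover {L : List (MvPolynomial ℕ k)}
    (hL : IsRootedList k G L) :
    ∀ u ∈ L, ∃ C ⊆ G.verts, Minimal G.IsVertexCover C ∧ u = ∏ v ∈ C, X v := by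
  induction hL with
  | edgeless G hG =>
    intro u hu
    rw [List.mem_singleton.1 hu]
    exact ⟨∅, Finset.empty_subset _, ⟨fun a b hab => by simp [hG a b] at hab,
      fun _ _ _ => Finset.empty_subset _⟩, Finset.prod_empty.symm⟩
  | step G v _ _ l _ _ _ Ls _ _ ih =>
    intro u hu
    simp only [List.mem_flatMap, List.mem_range, List.mem_map] at hu
    obtain ⟨i, hi, w, hw, rfl⟩ := hu
    obtain ⟨D, hDv, hD, rfl⟩ := ih i hi w hw
    have hdisj : Disjoint (G.nbr (l.getD i 0)) D := Finset.disjoint_right.2 fun y hy hyN =>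
      (Finset.mem_sdiff.1 (hDv hy)).2 (Finset.mem_insert_of_mem hyN)
    refine ⟨G.nbr (l.getD i 0) ∪ D, Finset.union_subset (Finset.filter_subset _ _)
      (hDv.trans Finset.sdiff_subset), FinGraph.minimal_isVertexCover_nbr_union hDv hD,
      (Finset.prod_union hdisj).symm⟩

theorem IsRootedList.mem_minGens {L : List (MvPolynomial ℕ k)} (hL : IsRootedList k G L)
    {u : MvPolynomial ℕ k} (hu : u ∈ L) : u ∈ minGens (coverIdeal k G) := by
  obtain ⟨C, -, hC, rfl⟩ := hL.exists_minimal_isVertexCover u hu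
  exact prod_X_mem_minGens hC

end CoverIdeal

theorem chordal_colon_of_factor_subset_colon_general (k : Type*) [Field k]
    (G : FinGraph) (s : ℕ)
    (L : List (MvPolynomial ℕ k)) (hL : IsRootedList k G L)
    (hFG : sFold (coverIdeal k G) s = minGens ((coverIdeal k G) ^ s))
    (Ys : List (MvPolynomial ℕ k))
    (hset : {Y | Y ∈ Ys} = minGens ((coverIdeal k G) ^ s))
    (hsort : Ys.Pairwise (rootedGt L s))
    (r : ℕ) (hr2 : r < Ys.length)
    (a : ℕ → ℕ) (hmax : IsMaxExpr L s a (Ys.getD r 1)) :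
    ∀ t, 1 ≤ t → 0 < a t →
      Submodule.colon (Ideal.span {x | x ∈ L.take t}) (Ideal.span {L.getD t 1}) ≤
        Submodule.colon (Ideal.span {x | x ∈ Ys.take r})
          (Ideal.span {Ys.getD r 1}) := by
  intro t _ hat
  have htL : t < L.length := by
    by_contra! h
    exact hat.ne' (hmax.1.1 t h)
  set c := a - Pi.single t 1
  have hac : a = c + Pi.single t 1 := by
    ext i
    rcases eq_or_ne i t with rfl | hi
    · simp [c]; omega
    · simp [c, hi]
  obtain ⟨hc0, hcs, hY⟩ := (isExprOn_add_single htL).1 (hac ▸ hmax.1)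
  set W := ∏ i ∈ Finset.range L.length, L.getD i 1 ^ c i
  rw [hY]
  refine Ideal.colon_span_singleton_le_colon_mul fun u hu => Ideal.subset_span ?_
  obtain ⟨j, hj, rfl⟩ := List.mem_take_iff_getElem.1 hu
  have hjL : j < L.length := lt_of_lt_of_le hj (min_le_right _ _)
  have hb := (isExprOn_add_single (c := c) hjL).2 ⟨hc0, hcs, rfl⟩
  rw [← List.getD_eq_getElem _ 1 hjL]
  have hmem : L.getD j 1 * W ∈ Ys := by
    change _ ∈ {Y | Y ∈ Ys}
    rw [hset, ← hFG]
    exact hb.mem_sFold fun u hu => hL.mem_minGens hu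
  exact mem_take_of_lexGt hsort hr2 hmax hmem hb
    (hac ▸ lexGt_add_single c (lt_of_lt_of_le hj (min_le_left _ _)))

/-- Let `G` be a chordal graph with `F(J(G)^s) = G(J(G)^s)`, let
`R(G) = u_1, …, u_q` be a rooted list of `G` and let `Y_0, …, Y_{p-1}` be the minimal
generators of `J(G)^s` listed in decreasing rooted order.  Suppose `Y_r` (`r ≥ 1`) has
maximal expression with exponent vector `a`.  Then for each index `t ≥ 1` occurring in
this expression (`a t > 0`), we have
`(u_1, …, u_{t-1}) : (u_t) ⊆ (Y_0, …, Y_{r-1}) : (Y_r)`. -/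
theorem chordal_colon_of_factor_subset_colon (k : Type*) [Field k]
    (G : FinGraph) (hG : G.Chordal) (s : ℕ)
    (L : List (MvPolynomial ℕ k)) (hL : IsRootedList k G L)
    (hFG : sFold (coverIdeal k G) s = minGens ((coverIdeal k G) ^ s))
    (Ys : List (MvPolynomial ℕ k))
    (hset : {Y | Y ∈ Ys} = minGens ((coverIdeal k G) ^ s))
    (hsort : Ys.Pairwise (rootedGt L s))
    (r : ℕ) (hr1 : 1 ≤ r) (hr2 : r < Ys.length)
    (a : ℕ → ℕ) (hmax : IsMaxExpr L s a (Ys.getD r 1)) :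
    ∀ t, 1 ≤ t → 0 < a t →
      Submodule.colon (Ideal.span {x | x ∈ L.take t}) (Ideal.span {L.getD t 1}) ≤
        Submodule.colon (Ideal.span {x | x ∈ Ys.take r})
          (Ideal.span {Ys.getD r 1}) :=
  chordal_colon_of_factor_subset_colon_general k G s L hL hFG Ys hset hsort r hr2 a hmax
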